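/- Let v ∈ C^∞([0,T] × 𝕋²; ℝ²) be a divergence-free drift, let ρ ∈ C^∞([0,T] × 𝕋²) solve the transport equation ∂_t ρ + v·∇ρ = 0, and let θ ∈ C^∞([0,T] × 𝕋²) solve the advection–diffusion equation ∂_t θ + v·∇θ = ν Δθ with ν > 0 and θ(0) = ρ(0). Then sup_{t∈[0,T]} ‖θ(t) − ρ(t)‖²_{L²} ≤ ( 2ν ∫₀^T ‖∇ρ‖²_{L²} dt )^{1/2} ( 2ν ∫₀^T ‖∇θ‖²_{L²} dt )^{1/2} ≤ ( 2ν ∫₀^T ‖∇ρ‖²_{L²} dt )^{1/2} ‖ρ(0)‖_{L²}. -/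

import Mathlib

open MeasureTheory Real Filter Topology RealInnerProductSpace
open scoped Classical

noncomputable section

abbrev E2 := EuclideanSpace ℝ (Fin 2)

def e2 (i : Fin 2) : E2 := EuclideanSpace.single i 1

def per2 (k : Fin 2 → ℤ) : E2 := WithLp.toLp 2 (fun i => (k i : ℝ))

def Periodic2v (v : E2 → E2) : Prop := ∀ (x : E2) (k : Fin 2 → ℤ), v (x + per2 k) = v x

def Periodic2s (θ : E2 → ℝ) : Prop := ∀ (x : E2) (k : Fin 2 → ℤ), θ (x + per2 k) = θ x

def box2 : Set E2 := {x | ∀ i, x i ∈ Set.Ico (0 : ℝ) 1}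

def l2sq2v (v : E2 → E2) : ℝ := ∫ x in box2, ‖v x‖ ^ 2

def l2sq2s (θ : E2 → ℝ) : ℝ := ∫ x in box2, (θ x) ^ 2

def l2norm2s (θ : E2 → ℝ) : ℝ := Real.sqrt (l2sq2s θ)

def gradsq2v (v : E2 → E2) : ℝ := ∫ x in box2, ∑ i, ‖fderiv ℝ v x (e2 i)‖ ^ 2

def gradsq2s (θ : E2 → ℝ) : ℝ := ∫ x in box2, ‖fderiv ℝ θ x‖ ^ 2

def DivFree2 (v : E2 → E2) : Prop := ∀ x, ∑ i, ⟪fderiv ℝ v x (e2 i), e2 i⟫ = 0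

def lap2s (θ : E2 → ℝ) (x : E2) : ℝ :=
  ∑ i, fderiv ℝ (fun y => fderiv ℝ θ y (e2 i)) x (e2 i)

def SpaceTimeSmooth2v (v : ℝ → E2 → E2) : Prop := ContDiff ℝ (⊤ : ℕ∞) (Function.uncurry v)

def SpaceTimeSmooth2s (θ : ℝ → E2 → ℝ) : Prop := ContDiff ℝ (⊤ : ℕ∞) (Function.uncurry θ)

/-- Weak (distributional) solution of the transport equation `∂ₜ θ + v ⬝ ∇θ = 0` on `(T₁,T₂)`. -/
def IsWeakTransport (T₁ T₂ : ℝ) (v : ℝ → E2 → E2) (θ : ℝ → E2 → ℝ) : Prop :=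
  ∀ φ : ℝ → E2 → ℝ, SpaceTimeSmooth2s φ → (∀ t, Periodic2s (φ t)) →
    (∃ K : Set ℝ, IsCompact K ∧ K ⊆ Set.Ioo T₁ T₂ ∧ ∀ t ∉ K, φ t = 0) →
    ∫ t in Set.Ioo T₁ T₂, ∫ x in box2,
      θ t x * (deriv (fun s => φ s x) t + fderiv ℝ (φ t) x (v t x)) = 0

/-- classical advection-diffusion equation with diffusivity ν and drift v, on times in I. -/
def IsAdvDiff (ν : ℝ) (I : Set ℝ) (v : ℝ → E2 → E2) (θ : ℝ → E2 → ℝ) : Prop :=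
  ∀ t ∈ I, ∀ x, deriv (fun s => θ s x) t + fderiv ℝ (θ t) x (v t x) = ν * lap2s (θ t) x

def knorm2 (k : Fin 2 → ℤ) : ℝ := Real.sqrt (∑ i, ((k i : ℝ)) ^ 2)

/-- projection onto Fourier modes with frequency above Λ (unit torus 𝕋²). -/
def Phigh (Λ : ℝ) (w : E2 → ℝ) : E2 → ℝ := fun x =>
  ∑' k : Fin 2 → ℤ,
    if Λ < knorm2 k then
      (∫ y in box2, w y * Real.cos (2 * π * ∑ i, (k i : ℝ) * ⟪x - y, e2 i⟫))
    else 0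


/-!
Write `w = θ - ρ`. Then `∂ₜ w + v ⬝ ∇w = ν Δθ`, and since `v` is divergence-free and everything
is periodic, `d/dt ‖w‖² = -2ν ∫ ∇w ⬝ ∇θ = -2ν ‖∇θ‖² + 2ν ∫ ∇ρ ⬝ ∇θ ≤ 2ν ‖∇ρ‖ ‖∇θ‖`.
Integrating from `w(0) = 0` and applying Cauchy–Schwarz in time gives the first bound; the energy
equality for `θ` gives `2ν ∫₀ᵀ ‖∇θ‖² ≤ ‖θ(0)‖² = ‖ρ(0)‖²`, hence the second.
Each integration by parts on `𝕋²` is the divergence theorem on the unit square, where the fluxes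
through opposite faces cancel by periodicity.
-/

open Function WithLp
open scoped Gradient

lemma SpaceTimeSmooth2s.contDiff {θ : ℝ → E2 → ℝ} (h : SpaceTimeSmooth2s θ) {n : ℕ} :
    ContDiff ℝ n (uncurry θ) :=
  h.of_le (by exact_mod_cast le_top)

lemma SpaceTimeSmooth2v.contDiff {v : ℝ → E2 → E2} (h : SpaceTimeSmooth2v v) {n : ℕ} :
    ContDiff ℝ n (uncurry v) :=
  h.of_le (by exact_mod_cast le_top)

section SpaceTime

variable {E G : Type*} [NormedAddCommGroup E] [NormedSpace ℝ E]
  [NormedAddCommGroup G] [NormedSpace ℝ G] {f : ℝ → E → G}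

lemma ContDiff.of_uncurry_left {n : WithTop ℕ∞} (hf : ContDiff ℝ n (uncurry f)) (t : ℝ) :
    ContDiff ℝ n (f t) :=
  hf.comp (contDiff_const.prodMk contDiff_id)

lemma ContDiff.differentiableAt_of_uncurry_right (hf : ContDiff ℝ 1 (uncurry f))
    (t : ℝ) (x : E) : DifferentiableAt ℝ (fun s => f s x) t :=
  (hf.comp (contDiff_id.prodMk contDiff_const)).differentiable one_ne_zero t

lemma ContDiff.continuous_fderiv_of_uncurry (hf : ContDiff ℝ 1 (uncurry f)) :
    Continuous fun p : ℝ × E => fderiv ℝ (f p.1) p.2 :=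
  (ContDiff.fderiv (f := fun (p : ℝ × E) y => f p.1 y) (n := 0)
    (hf.comp (contDiff_fst.fst.prodMk contDiff_snd)) contDiff_snd (by simp)).continuous

lemma ContDiff.continuous_deriv_of_uncurry (hf : ContDiff ℝ 1 (uncurry f)) :
    Continuous fun p : ℝ × E => deriv (fun s => f s p.2) p.1 :=
  (ContDiff.fderiv (f := fun (p : ℝ × E) s => f s p.2) (n := 0)
    (hf.comp (contDiff_snd.prodMk contDiff_fst.snd)) contDiff_fst (by simp)).continuous.clm_apply
    continuous_const

end SpaceTime

lemma Periodic2s.gradient {θ : E2 → ℝ} (h : Periodic2s θ) : Periodic2v (∇ θ) := by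
  intro x k
  have hθ : (fun y => θ (y + per2 k)) = θ := funext fun y => h y k
  simp only [_root_.gradient, ← fderiv_comp_add_right, hθ]

lemma Periodic2s.smul {u : E2 → ℝ} {V : E2 → E2} (hu : Periodic2s u) (hV : Periodic2v V) :
    Periodic2v fun y => u y • V y := fun x k => by simp only [hu x k, hV x k]

namespace Torus2

def closedBox2 : Set E2 := {x | ∀ i, x i ∈ Set.Icc (0 : ℝ) 1}

lemma box2_eq_preimage : box2 = ofLp ⁻¹' Set.univ.pi fun _ => Set.Ico (0 : ℝ) 1 := by
  ext x; simp [box2]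

lemma closedBox2_eq_preimage : closedBox2 = ofLp ⁻¹' Set.Icc (0 : Fin 2 → ℝ) 1 := by
  ext x; simp [closedBox2, Pi.le_def, forall_and]

lemma isCompact_closedBox2 : IsCompact closedBox2 := by
  rw [closedBox2_eq_preimage]
  exact (PiLp.continuousLinearEquiv 2 ℝ fun _ : Fin 2 => ℝ).toHomeomorph.isCompact_preimage.2
    isCompact_Icc

lemma box2_subset_closedBox2 : box2 ⊆ closedBox2 := fun _ hx i => Set.Ico_subset_Icc_self (hx i)

lemma measurableSet_box2 : MeasurableSet box2 := by
  rw [box2_eq_preimage]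
  exact (PiLp.volume_preserving_ofLp (Fin 2)).measurable
    (MeasurableSet.univ_pi fun _ => measurableSet_Ico)

lemma box2_ae_eq_closedBox2 : box2 =ᵐ[volume] closedBox2 := by
  rw [box2_eq_preimage, closedBox2_eq_preimage]
  exact (PiLp.volume_preserving_ofLp (Fin 2)).quasiMeasurePreserving.preimage_ae_eq
    Measure.univ_pi_Ico_ae_eq_Icc

lemma integrableOn_box2 {G : Type*} [NormedAddCommGroup G] {g : E2 → G} (hg : Continuous g) :
    IntegrableOn g box2 :=
  (hg.continuousOn.integrableOn_compact isCompact_closedBox2).mono_set box2_subset_closedBox2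

lemma memLp_two_box2 {f : E2 → ℝ} (hf : Continuous f) : MemLp f 2 (volume.restrict box2) :=
  (memLp_two_iff_integrable_sq hf.aestronglyMeasurable).2 (integrableOn_box2 (hf.pow 2))

section Integrals

variable {G : Type*} [NormedAddCommGroup G] [NormedSpace ℝ G]

lemma setIntegral_box2_eq_setIntegral_Icc (g : E2 → G) :
    ∫ x in box2, g x = ∫ y in Set.Icc (0 : Fin 2 → ℝ) 1, g (toLp 2 y) := by
  rw [setIntegral_congr_set box2_ae_eq_closedBox2, closedBox2_eq_preimage]
  exact (PiLp.volume_preserving_ofLp (Fin 2)).setIntegral_preimage_emb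
    (MeasurableEquiv.toLp 2 (Fin 2 → ℝ)).symm.measurableEmbedding (fun y => g (toLp 2 y)) _

lemma continuous_setIntegral_box2 {X : Type*} [TopologicalSpace X] [FirstCountableTopology X]
    [LocallyCompactSpace X] {g : X → E2 → G} (hg : Continuous (uncurry g)) :
    Continuous fun t => ∫ x in box2, g t x := by
  simp only [setIntegral_congr_set (μ := volume) (f := g _) box2_ae_eq_closedBox2]
  exact continuous_parametric_integral_of_continuous hg isCompact_closedBox2

theorem hasDerivAt_setIntegral_box2 [CompleteSpace G] {f : ℝ → E2 → G}
    (hf : ContDiff ℝ 1 (uncurry f)) (t : ℝ) :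
    HasDerivAt (fun s => ∫ x in box2, f s x) (∫ x in box2, deriv (fun s => f s x) t) t := by
  have hslice : ∀ s, Continuous (f s) := fun s => (hf.of_uncurry_left s).continuous
  obtain ⟨C, hC⟩ := ((isCompact_Icc (a := t - 1) (b := t + 1)).prod
    isCompact_closedBox2).exists_bound_of_continuousOn hf.continuous_deriv_of_uncurry.continuousOn
  refine (hasDerivAt_integral_of_dominated_loc_of_deriv_le (bound := fun _ => C)
    (F' := fun s x => deriv (fun τ => f τ x) s) (Icc_mem_nhds (sub_one_lt t) (lt_add_one t))
    (.of_forall fun s => (hslice s).aestronglyMeasurable) (integrableOn_box2 (hslice t))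
    (hf.continuous_deriv_of_uncurry.comp
      (continuous_const.prodMk continuous_id)).aestronglyMeasurable
    ?_ (integrableOn_const ((measure_mono box2_subset_closedBox2).trans_lt
      isCompact_closedBox2.measure_lt_top).ne) ?_).2
  · rw [ae_restrict_iff' measurableSet_box2]
    exact .of_forall fun x hx s hs => hC (s, x) ⟨hs, box2_subset_closedBox2 hx⟩
  · exact .of_forall fun x s _ => (hf.differentiableAt_of_uncurry_right s x).hasDerivAt

end Integrals

/-- `DivFree2 F` unfolds to `∀ x, div2 F x = 0`. -/
def div2 (F : E2 → E2) (x : E2) : ℝ := ∑ i, ⟪fderiv ℝ F x (e2 i), e2 i⟫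

lemma inner_e2_right (a : E2) (i : Fin 2) : ⟪a, e2 i⟫ = a i := by
  simp [e2, EuclideanSpace.inner_single_right]

lemma sum_apply_e2_mul (L : E2 →L[ℝ] ℝ) (y : E2) : ∑ i, L (e2 i) * y i = L y := by
  conv_rhs => rw [← (EuclideanSpace.basisFun (Fin 2) ℝ).sum_repr y]
  simp [e2, mul_comm]

lemma toLp_insertNth_one (i : Fin 2) (x : Fin 1 → ℝ) :
    toLp 2 (i.insertNth (1 : ℝ) x) = toLp 2 (i.insertNth 0 x) + per2 (Pi.single i 1) := by
  ext j
  rcases eq_or_ne j i with rfl | hj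
  · simp [per2]
  · obtain ⟨k, rfl⟩ := Fin.exists_succAbove_eq hj
    simp [per2]

theorem integral_div2_eq_zero {F : E2 → E2} (hF : ContDiff ℝ 1 F) (hper : Periodic2v F) :
    ∫ x in box2, div2 F x = 0 := by
  set f : Fin 2 → (Fin 2 → ℝ) → ℝ := fun i y => F (toLp 2 y) i
  have hf : ∀ i, ContDiff ℝ 1 (f i) := fun i =>
    (EuclideanSpace.proj (𝕜 := ℝ) i).contDiff.comp
      (hF.comp (PiLp.continuousLinearEquiv 2 ℝ fun _ : Fin 2 => ℝ).symm.contDiff)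
  have hdiv : ∀ y, ∑ i, fderiv ℝ (f i) y (Pi.single i 1) = div2 F (toLp 2 y) := by
    intro y
    refine Finset.sum_congr rfl fun i _ => ?_
    have hFy := (hF.differentiable one_ne_zero (toLp 2 y)).hasFDerivAt
    have hfi : HasFDerivAt (f i) _ y := (EuclideanSpace.proj (𝕜 := ℝ) i).hasFDerivAt.comp y
      (hFy.comp y (PiLp.continuousLinearEquiv 2 ℝ fun _ : Fin 2 => ℝ).symm.hasFDerivAt)
    rw [hfi.fderiv, inner_e2_right]
    rfl
  have hcont : Continuous fun y => ∑ i, fderiv ℝ (f i) y (Pi.single i 1) :=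
    continuous_finsetSum _ fun i _ =>
      ((hf i).continuous_fderiv one_ne_zero).clm_apply continuous_const
  have hface : ∀ i (x : Fin 1 → ℝ), f i (i.insertNth 1 x) = f i (i.insertNth 0 x) := by
    intro i x
    simp only [f, toLp_insertNth_one]
    rw [hper]
  rw [setIntegral_box2_eq_setIntegral_Icc, ← setIntegral_congr_fun measurableSet_Icc
    fun y _ => hdiv y, integral_divergence_of_hasFDerivAt_off_countable' 0 1
    (fun _ => zero_le_one) f (fun i => fderiv ℝ (f i)) ∅ Set.countable_empty
    (fun i => (hf i).continuous.continuousOn)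
    (fun y _ i => ((hf i).differentiable one_ne_zero y).hasFDerivAt)
    (hcont.continuousOn.integrableOn_compact isCompact_Icc)]
  exact Finset.sum_eq_zero fun i _ => by simp [hface]

lemma contDiff_gradient {θ : E2 → ℝ} {m n : WithTop ℕ∞} (hθ : ContDiff ℝ n θ) (hmn : m + 1 ≤ n) :
    ContDiff ℝ m (∇ θ) :=
  (InnerProductSpace.toDual ℝ E2).symm.contDiff.comp (hθ.fderiv_right hmn)

lemma div2_smul {u : E2 → ℝ} {V : E2 → E2} {x : E2} (hu : DifferentiableAt ℝ u x)
    (hV : DifferentiableAt ℝ V x) :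
    div2 (fun y => u y • V y) x = u x * div2 V x + fderiv ℝ u x (V x) := by
  simp only [div2, fderiv_fun_smul hu hV, add_apply, smul_apply,
    ContinuousLinearMap.smulRight_apply, inner_add_left, real_inner_smul_left,
    Finset.sum_add_distrib, Finset.mul_sum, inner_e2_right, sum_apply_e2_mul]

lemma div2_gradient {θ : E2 → ℝ} (hθ : ContDiff ℝ 2 θ) (x : E2) : div2 (∇ θ) x = lap2s θ x := by
  refine Finset.sum_congr rfl ?_
  intro i _
  have hcoord : (fun y => fderiv ℝ θ y (e2 i)) = EuclideanSpace.proj (𝕜 := ℝ) i ∘ ∇ θ := by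
    funext y
    simp [← inner_gradient_left, inner_e2_right]
  have hd := (EuclideanSpace.proj (𝕜 := ℝ) i).hasFDerivAt.comp x
    ((contDiff_gradient hθ le_rfl).differentiable one_ne_zero x).hasFDerivAt
  rw [hcoord, hd.fderiv, inner_e2_right]
  rfl

lemma continuous_div2 {F : E2 → E2} (hF : ContDiff ℝ 1 F) : Continuous (div2 F) :=
  continuous_finsetSum _ fun _ _ =>
    ((hF.continuous_fderiv one_ne_zero).clm_apply continuous_const).inner continuous_const

theorem integral_fderiv_apply_eq_zero_of_divFree2 {u : E2 → ℝ} {V : E2 → E2}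
    (hu : ContDiff ℝ 1 u) (hV : ContDiff ℝ 1 V) (hu_per : Periodic2s u) (hV_per : Periodic2v V)
    (hdf : DivFree2 V) : ∫ x in box2, fderiv ℝ u x (V x) = 0 := by
  rw [← integral_div2_eq_zero (F := fun y => u y • V y) (hu.smul hV) (hu_per.smul hV_per)]
  refine setIntegral_congr_fun measurableSet_box2 fun x _ => ?_
  rw [div2_smul (hu.differentiable one_ne_zero x) (hV.differentiable one_ne_zero x),
    show div2 V x = 0 from hdf x, mul_zero, zero_add]

theorem integral_mul_lap2s {u θ : E2 → ℝ} (hu : ContDiff ℝ 1 u) (hθ : ContDiff ℝ 2 θ)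
    (hu_per : Periodic2s u) (hθ_per : Periodic2s θ) :
    ∫ x in box2, u x * lap2s θ x = -∫ x in box2, ⟪∇ u x, ∇ θ x⟫ := by
  have hgrad : ContDiff ℝ 1 (∇ θ) := contDiff_gradient hθ le_rfl
  have hpt : ∀ x, div2 (fun y => u y • ∇ θ y) x = u x * lap2s θ x + ⟪∇ u x, ∇ θ x⟫ := fun x => by
    rw [div2_smul (hu.differentiable one_ne_zero x) (hgrad.differentiable one_ne_zero x),
      div2_gradient hθ, inner_gradient_left]
  have hdiv := integral_div2_eq_zero (F := fun y => u y • ∇ θ y) (hu.smul hgrad)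
    (hu_per.smul hθ_per.gradient)
  rw [setIntegral_congr_fun measurableSet_box2 fun x _ => hpt x,
    integral_add (f := fun x => u x * lap2s θ x)
      (integrableOn_box2 (hu.continuous.mul ((continuous_div2 hgrad).congr (div2_gradient hθ))))
      (integrableOn_box2 ((contDiff_gradient (m := 0) hu (by simp)).continuous.inner
        hgrad.continuous))] at hdiv
  linarith

/-- `d/dt ∫ u² = 2a ∫ u Δg - ∫ ∇(u²) ⬝ v`: integrate the first term by parts; the second vanishes
because `v` is divergence-free. -/
theorem hasDerivAt_l2sq2s {a t : ℝ} {u : ℝ → E2 → ℝ} {g : E2 → ℝ} {v : E2 → E2}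
    (hu : ContDiff ℝ 1 (uncurry u)) (hg : ContDiff ℝ 2 g) (hv : ContDiff ℝ 1 v)
    (hu_per : Periodic2s (u t)) (hg_per : Periodic2s g) (hv_per : Periodic2v v)
    (hdf : DivFree2 v)
    (hu_t : ∀ x, HasDerivAt (fun s => u s x) (a * lap2s g x - fderiv ℝ (u t) x (v x)) t) :
    HasDerivAt (fun s => l2sq2s (u s)) (-2 * a * ∫ x in box2, ⟪∇ (u t) x, ∇ g x⟫) t := by
  have hut : ContDiff ℝ 1 (u t) := hu.of_uncurry_left t
  have hderiv : ∀ x, deriv (fun s => u s x ^ 2) t =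
      2 * a * (u t x * lap2s g x) - fderiv ℝ (fun y => u t y ^ 2) x (v x) := fun x => by
    rw [((hu_t x).fun_pow 2).deriv, fderiv_fun_pow 2 (hut.differentiable one_ne_zero x)]
    simp only [smul_apply, smul_eq_mul]
    ring
  have hlap : Continuous (lap2s g) :=
    (continuous_div2 (contDiff_gradient hg le_rfl)).congr (div2_gradient hg)
  have hadv : Continuous fun x => fderiv ℝ (fun y => u t y ^ 2) x (v x) :=
    ((hut.pow 2).continuous_fderiv one_ne_zero).clm_apply hv.continuous
  have hsq := hasDerivAt_setIntegral_box2 (f := fun s x => u s x ^ 2) (hu.pow 2) t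
  rw [setIntegral_congr_fun measurableSet_box2 fun x _ => hderiv x,
    integral_sub (f := fun x => 2 * a * (u t x * lap2s g x))
      (integrableOn_box2 (continuous_const.mul (hut.continuous.mul hlap)))
      (integrableOn_box2 hadv),
    integral_const_mul, integral_mul_lap2s hut hg hu_per hg_per,
    integral_fderiv_apply_eq_zero_of_divFree2 (hut.pow 2) hv
      (fun x k => by simp only [hu_per x k]) hv_per hdf] at hsq
  rwa [show -2 * a * ∫ x in box2, ⟪∇ (u t) x, ∇ g x⟫ =
    2 * a * -(∫ x in box2, ⟪∇ (u t) x, ∇ g x⟫) - 0 by ring]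

lemma integral_mul_le_sqrt_mul_sqrt {α : Type*} [MeasurableSpace α] {μ : Measure α}
    {f g : α → ℝ} (hf : 0 ≤ᵐ[μ] f) (hg : 0 ≤ᵐ[μ] g) (hf2 : MemLp f 2 μ) (hg2 : MemLp g 2 μ) :
    ∫ x, f x * g x ∂μ ≤ √(∫ x, f x ^ 2 ∂μ) * √(∫ x, g x ^ 2 ∂μ) := by
  have h := integral_mul_le_Lp_mul_Lq_of_nonneg Real.HolderConjugate.two_two hf hg
    (by simpa using hf2) (by simpa using hg2)
  simpa only [Real.sqrt_eq_rpow, one_div, Real.rpow_ofNat] using h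

lemma integral_sqrt_mul_sqrt_le {a b : ℝ} {f g : ℝ → ℝ} (hab : a ≤ b) (hf : Continuous f)
    (hg : Continuous g) (hf0 : ∀ s, 0 ≤ f s) (hg0 : ∀ s, 0 ≤ g s) :
    ∫ s in a..b, √(f s) * √(g s) ≤ √(∫ s in a..b, f s) * √(∫ s in a..b, g s) := by
  have hL2 : ∀ {h : ℝ → ℝ}, Continuous h →
      MemLp (fun s => √(h s)) 2 (volume.restrict (Set.Ioc a b)) := fun hh =>
    (memLp_two_iff_integrable_sq hh.sqrt.aestronglyMeasurable).2
      (hh.sqrt.pow 2).integrableOn_Ioc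
  simp only [intervalIntegral.integral_of_le hab]
  have h := integral_mul_le_sqrt_mul_sqrt (.of_forall fun s => Real.sqrt_nonneg (f s))
    (.of_forall fun s => Real.sqrt_nonneg (g s)) (hL2 hf) (hL2 hg)
  simpa only [Real.sq_sqrt (hf0 _), Real.sq_sqrt (hg0 _)] using h

lemma l2sq2s_nonneg (θ : E2 → ℝ) : 0 ≤ l2sq2s θ :=
  setIntegral_nonneg measurableSet_box2 fun _ _ => sq_nonneg _

lemma gradsq2s_nonneg (θ : E2 → ℝ) : 0 ≤ gradsq2s θ :=
  setIntegral_nonneg measurableSet_box2 fun _ _ => sq_nonneg _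

lemma integral_inner_gradient_self (θ : E2 → ℝ) :
    ∫ x in box2, ⟪∇ θ x, ∇ θ x⟫ = gradsq2s θ := by
  simp only [gradsq2s, real_inner_self_eq_norm_sq, _root_.gradient, LinearIsometryEquiv.norm_map]

lemma integral_inner_gradient_le {f g : E2 → ℝ} (hf : ContDiff ℝ 1 f) (hg : ContDiff ℝ 1 g) :
    ∫ x in box2, ⟪∇ f x, ∇ g x⟫ ≤ √(gradsq2s f) * √(gradsq2s g) := by
  have hf' : Continuous fun x => ‖fderiv ℝ f x‖ := (hf.continuous_fderiv one_ne_zero).norm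
  have hg' : Continuous fun x => ‖fderiv ℝ g x‖ := (hg.continuous_fderiv one_ne_zero).norm
  calc ∫ x in box2, ⟪∇ f x, ∇ g x⟫ ≤ ∫ x in box2, ‖fderiv ℝ f x‖ * ‖fderiv ℝ g x‖ :=
        setIntegral_mono
          (integrableOn_box2 ((contDiff_gradient (m := 0) hf (by simp)).continuous.inner
            (contDiff_gradient (m := 0) hg (by simp)).continuous))
          (integrableOn_box2 (hf'.mul hg')) fun x => (real_inner_le_norm _ _).trans_eq
            (by simp only [_root_.gradient, LinearIsometryEquiv.norm_map])
    _ ≤ √(gradsq2s f) * √(gradsq2s g) :=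
        integral_mul_le_sqrt_mul_sqrt (.of_forall fun _ => norm_nonneg _)
          (.of_forall fun _ => norm_nonneg _) (memLp_two_box2 hf') (memLp_two_box2 hg')

lemma continuous_gradsq2s {f : ℝ → E2 → ℝ} (hf : ContDiff ℝ 1 (uncurry f)) :
    Continuous fun t => gradsq2s (f t) :=
  continuous_setIntegral_box2 (g := fun t x => ‖fderiv ℝ (f t) x‖ ^ 2)
    (hf.continuous_fderiv_of_uncurry.norm.pow 2)

section Evolution

variable {ν t : ℝ} {v : E2 → E2} {ρ θ : ℝ → E2 → ℝ}

lemma hasDerivAt_of_deriv_add_fderiv_eq {u : ℝ → E2 → ℝ} {f : E2 → ℝ}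
    (hu : ContDiff ℝ 1 (uncurry u))
    (hu_t : ∀ x, deriv (fun s => u s x) t + fderiv ℝ (u t) x (v x) = f x) (x : E2) :
    HasDerivAt (fun s => u s x) (f x - fderiv ℝ (u t) x (v x)) t :=
  (hu.differentiableAt_of_uncurry_right t x).hasDerivAt.congr_deriv (by linarith [hu_t x])

theorem hasDerivAt_l2sq2s_of_advDiff (hv : ContDiff ℝ 1 v) (hθ : ContDiff ℝ 2 (uncurry θ))
    (hv_per : Periodic2v v) (hθ_per : Periodic2s (θ t)) (hdf : DivFree2 v)
    (hθ_t : ∀ x, deriv (fun s => θ s x) t + fderiv ℝ (θ t) x (v x) = ν * lap2s (θ t) x) :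
    HasDerivAt (fun s => l2sq2s (θ s)) (-2 * ν * gradsq2s (θ t)) t := by
  rw [← integral_inner_gradient_self]
  exact hasDerivAt_l2sq2s (hθ.of_le one_le_two) (hθ.of_uncurry_left t) hv hθ_per hθ_per hv_per
    hdf (hasDerivAt_of_deriv_add_fderiv_eq (hθ.of_le one_le_two) hθ_t)

theorem hasDerivAt_l2sq2s_sub_of_advDiff_of_transport (hv : ContDiff ℝ 1 v)
    (hρ : ContDiff ℝ 1 (uncurry ρ)) (hθ : ContDiff ℝ 2 (uncurry θ)) (hv_per : Periodic2v v)
    (hρ_per : Periodic2s (ρ t)) (hθ_per : Periodic2s (θ t)) (hdf : DivFree2 v)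
    (hρ_t : ∀ x, deriv (fun s => ρ s x) t + fderiv ℝ (ρ t) x (v x) = 0)
    (hθ_t : ∀ x, deriv (fun s => θ s x) t + fderiv ℝ (θ t) x (v x) = ν * lap2s (θ t) x) :
    HasDerivAt (fun s => l2sq2s (fun x => θ s x - ρ s x))
      (-2 * ν * (gradsq2s (θ t) - ∫ x in box2, ⟪∇ (ρ t) x, ∇ (θ t) x⟫)) t := by
  have hθ1 : ContDiff ℝ 1 (uncurry θ) := hθ.of_le one_le_two
  have hdiff : ∀ x, fderiv ℝ (fun y => θ t y - ρ t y) x = fderiv ℝ (θ t) x - fderiv ℝ (ρ t) x :=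
    fun x => fderiv_fun_sub ((hθ1.of_uncurry_left t).differentiable one_ne_zero x)
      ((hρ.of_uncurry_left t).differentiable one_ne_zero x)
  have henergy := hasDerivAt_l2sq2s (u := fun s x => θ s x - ρ s x) (hθ1.sub hρ)
    (hθ.of_uncurry_left t) hv (fun x k => by simp only [hρ_per x k, hθ_per x k]) hθ_per hv_per hdf
    fun x => ((hasDerivAt_of_deriv_add_fderiv_eq hθ1 hθ_t x).sub
      (hasDerivAt_of_deriv_add_fderiv_eq hρ hρ_t x)).congr_deriv
      (by rw [hdiff, sub_apply]; ring)
  have hpt : ∀ x, ⟪∇ (fun y => θ t y - ρ t y) x, ∇ (θ t) x⟫ =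
      ⟪∇ (θ t) x, ∇ (θ t) x⟫ - ⟪∇ (ρ t) x, ∇ (θ t) x⟫ := fun x => by
    simp only [inner_gradient_left, hdiff, sub_apply]
  have hgrad : ∀ {f : ℝ → E2 → ℝ}, ContDiff ℝ 1 (uncurry f) → Continuous (∇ (f t)) :=
    fun hf => (contDiff_gradient (m := 0) (hf.of_uncurry_left t) (by simp)).continuous
  rwa [setIntegral_congr_fun measurableSet_box2 fun x _ => hpt x, integral_sub
    (integrableOn_box2 ((hgrad hθ1).inner (hgrad hθ1)))
    (integrableOn_box2 ((hgrad hρ).inner (hgrad hθ1))), integral_inner_gradient_self] at henergy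

end Evolution

section Solutions

variable {ν T : ℝ} {v : ℝ → E2 → E2} {ρ θ : ℝ → E2 → ℝ}

theorem two_mul_integral_gradsq2s_le_of_advDiff (hT : 0 ≤ T) (hv : ∀ s, ContDiff ℝ 1 (v s))
    (hθ : ContDiff ℝ 2 (uncurry θ)) (hv_per : ∀ s, Periodic2v (v s))
    (hθ_per : ∀ s, Periodic2s (θ s)) (hdf : ∀ s, DivFree2 (v s))
    (hθ_eq : IsAdvDiff ν (Set.Icc 0 T) v θ) :
    2 * ν * ∫ s in 0..T, gradsq2s (θ s) ≤ l2sq2s (θ 0) := by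
  have hftc := intervalIntegral.integral_eq_sub_of_hasDerivAt (f := fun s => l2sq2s (θ s))
    (fun s hs => hasDerivAt_l2sq2s_of_advDiff (hv s) hθ (hv_per s) (hθ_per s) (hdf s)
      (hθ_eq s (Set.uIcc_of_le hT ▸ hs)))
    ((continuous_const.mul (continuous_gradsq2s (hθ.of_le one_le_two))).intervalIntegrable 0 T)
  rw [intervalIntegral.integral_const_mul] at hftc
  linarith [l2sq2s_nonneg (θ T)]

theorem l2sq2s_sub_le_integral_of_advDiff_of_transport {t : ℝ} (hν : 0 ≤ ν)
    (ht : t ∈ Set.Icc 0 T) (hv : ∀ s, ContDiff ℝ 1 (v s)) (hρ : ContDiff ℝ 1 (uncurry ρ))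
    (hθ : ContDiff ℝ 2 (uncurry θ)) (hv_per : ∀ s, Periodic2v (v s))
    (hρ_per : ∀ s, Periodic2s (ρ s)) (hθ_per : ∀ s, Periodic2s (θ s))
    (hdf : ∀ s, DivFree2 (v s))
    (hρ_eq : ∀ s ∈ Set.Icc 0 T, ∀ x, deriv (fun s => ρ s x) s + fderiv ℝ (ρ s) x (v s x) = 0)
    (hθ_eq : IsAdvDiff ν (Set.Icc 0 T) v θ) (hinit : θ 0 = ρ 0) :
    l2sq2s (fun x => θ t x - ρ t x) ≤
      ∫ s in 0..t, √(2 * ν * gradsq2s (ρ s)) * √(2 * ν * gradsq2s (θ s)) := by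
  have hderiv : ∀ s ∈ Set.Icc 0 t, HasDerivAt (fun s => l2sq2s (fun x => θ s x - ρ s x))
      (-2 * ν * (gradsq2s (θ s) - ∫ x in box2, ⟪∇ (ρ s) x, ∇ (θ s) x⟫)) s := fun s hs =>
    have hs' : s ∈ Set.Icc 0 T := ⟨hs.1, hs.2.trans ht.2⟩
    hasDerivAt_l2sq2s_sub_of_advDiff_of_transport (hv s) hρ hθ (hv_per s) (hρ_per s) (hθ_per s)
      (hdf s) (hρ_eq s hs') (hθ_eq s hs')
  have hbound : ∀ s, -2 * ν * (gradsq2s (θ s) - ∫ x in box2, ⟪∇ (ρ s) x, ∇ (θ s) x⟫) ≤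
      √(2 * ν * gradsq2s (ρ s)) * √(2 * ν * gradsq2s (θ s)) := fun s => by
    have hCS := integral_inner_gradient_le (hρ.of_uncurry_left s)
      ((hθ.of_le one_le_two).of_uncurry_left s)
    rw [Real.sqrt_mul' _ (gradsq2s_nonneg _), Real.sqrt_mul' _ (gradsq2s_nonneg _),
      mul_mul_mul_comm, Real.mul_self_sqrt (by positivity)]
    nlinarith [gradsq2s_nonneg (θ s), mul_le_mul_of_nonneg_left hCS (by positivity : 0 ≤ 2 * ν)]
  have hcont : Continuous fun s => √(2 * ν * gradsq2s (ρ s)) * √(2 * ν * gradsq2s (θ s)) :=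
    (continuous_const.mul (continuous_gradsq2s hρ)).sqrt.mul
      (continuous_const.mul (continuous_gradsq2s (hθ.of_le one_le_two))).sqrt
  have hftc := intervalIntegral.sub_le_integral_of_hasDeriv_right_of_le ht.1
    (fun s hs => (hderiv s hs).continuousAt.continuousWithinAt)
    (fun s hs => (hderiv s (Set.Ioo_subset_Icc_self hs)).hasDerivWithinAt)
    hcont.integrableOn_Icc (fun s _ => hbound s)
  simpa [hinit, l2sq2s] using hftc

end Solutions

end Torus2

open Torus2

/-- Stability estimate between the transport and advection–diffusion evolutions with the
same smooth divergence-free drift and the same initial data. -/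
theorem transport_advdiff_distance
    (T ν : ℝ) (hT : 0 < T) (hν : 0 < ν)
    (v : ℝ → E2 → E2) (ρ θ : ℝ → E2 → ℝ)
    (hv : SpaceTimeSmooth2v v) (hρ : SpaceTimeSmooth2s ρ) (hθ : SpaceTimeSmooth2s θ)
    (hvper : ∀ t, Periodic2v (v t)) (hρper : ∀ t, Periodic2s (ρ t)) (hθper : ∀ t, Periodic2s (θ t))
    (hdf : ∀ t, DivFree2 (v t))
    (htransport : ∀ t ∈ Set.Icc (0:ℝ) T, ∀ x,
      deriv (fun s => ρ s x) t + fderiv ℝ (ρ t) x (v t x) = 0)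
    (hadvdiff : IsAdvDiff ν (Set.Icc (0:ℝ) T) v θ)
    (hinit : θ 0 = ρ 0) :
    (∀ t ∈ Set.Icc (0:ℝ) T,
      l2sq2s (fun x => θ t x - ρ t x) ≤
        Real.sqrt (2 * ν * ∫ s in (0:ℝ)..T, gradsq2s (ρ s)) *
          Real.sqrt (2 * ν * ∫ s in (0:ℝ)..T, gradsq2s (θ s))) ∧
    Real.sqrt (2 * ν * ∫ s in (0:ℝ)..T, gradsq2s (ρ s)) *
        Real.sqrt (2 * ν * ∫ s in (0:ℝ)..T, gradsq2s (θ s)) ≤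
      Real.sqrt (2 * ν * ∫ s in (0:ℝ)..T, gradsq2s (ρ s)) * l2norm2s (ρ 0) := by
  have hv1 : ∀ s, ContDiff ℝ 1 (v s) := (hv.contDiff (n := 1)).of_uncurry_left
  have hρ1 : ContDiff ℝ 1 (uncurry ρ) := hρ.contDiff
  have hθ2 : ContDiff ℝ 2 (uncurry θ) := hθ.contDiff
  have hρ2ν : Continuous fun s => 2 * ν * gradsq2s (ρ s) :=
    continuous_const.mul (continuous_gradsq2s hρ1)
  have hθ2ν : Continuous fun s => 2 * ν * gradsq2s (θ s) :=
    continuous_const.mul (continuous_gradsq2s (hθ2.of_le one_le_two))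
  refine ⟨fun t ht => ?_, mul_le_mul_of_nonneg_left (Real.sqrt_le_sqrt
    (two_mul_integral_gradsq2s_le_of_advDiff hT.le hv1 hθ2 hvper hθper hdf hadvdiff
      |>.trans_eq (congrArg l2sq2s hinit))) (Real.sqrt_nonneg _)⟩
  calc l2sq2s (fun x => θ t x - ρ t x)
      ≤ ∫ s in (0:ℝ)..t, √(2 * ν * gradsq2s (ρ s)) * √(2 * ν * gradsq2s (θ s)) :=
        l2sq2s_sub_le_integral_of_advDiff_of_transport hν.le ht hv1 hρ1 hθ2 hvper hρper hθper hdf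
          htransport hadvdiff hinit
    _ ≤ ∫ s in (0:ℝ)..T, √(2 * ν * gradsq2s (ρ s)) * √(2 * ν * gradsq2s (θ s)) :=
        intervalIntegral.integral_mono_interval le_rfl ht.1 ht.2 (.of_forall fun _ => by positivity)
          ((hρ2ν.sqrt.mul hθ2ν.sqrt).intervalIntegrable 0 T)
    _ ≤ _ := by
        simpa only [intervalIntegral.integral_const_mul] using
          integral_sqrt_mul_sqrt_le hT.le hρ2ν hθ2ν (fun s => by positivity [gradsq2s_nonneg (ρ s)])
            (fun s => by positivity [gradsq2s_nonneg (θ s)])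

end
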